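/- For 0 < q < 1 and integers 0 ≤ k ≤ ⌊n/2⌋, one has |(q;q)_∞/(q;q)_{n-k} - 1| ≤ (-q³;q)_∞ q^{n/2} / (1-q), where (-q³;q)_∞ = ∏_{j=0}^∞ (1 + q^{j+3}). -/

import Mathlib

/-!
Splitting off the first `m` factors, `(q;q)_∞ / (q;q)_m = ∏_{j > m} (1 - q^j)`. By the Weierstrass
product inequality `∏ (1 - a_j) ≥ 1 - ∑ a_j` (for `0 ≤ a_j ≤ 1`) this tail product lies between
`1 - q^{m+1}/(1-q)` and `1`. For `m = n - k ≥ n/2` the error `q^{m+1}/(1-q)` is at most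
`q^{n/2}/(1-q)`, and the factor `(-q³;q)_∞ ≥ 1` only weakens the bound.
-/

/-- The q-Pochhammer symbol `(q;q)_m = ∏_{j=1}^m (1 - q^j)`. -/
noncomputable def qPoch (q : ℝ) (m : ℕ) : ℝ := ∏ j ∈ Finset.range m, (1 - q ^ (j + 1))

/-- `(q;q)_∞ = ∏_{j=1}^∞ (1 - q^j)`. -/
noncomputable def qPochInf (q : ℝ) : ℝ := ∏' j : ℕ, (1 - q ^ (j + 1))

open Finset

theorem Finset.one_sub_sum_le_prod_one_sub {ι R : Type*} [CommRing R] [LinearOrder R]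
    [IsStrictOrderedRing R] (s : Finset ι) {a : ι → R} (h0 : ∀ i ∈ s, 0 ≤ a i)
    (h1 : ∀ i ∈ s, a i ≤ 1) : 1 - ∑ i ∈ s, a i ≤ ∏ i ∈ s, (1 - a i) := by
  classical
  induction s using Finset.induction_on with
  | empty => simp
  | insert i s hi ih =>
    rw [prod_insert hi, sum_insert hi]
    have ih := ih (fun j hj => h0 j (mem_insert_of_mem hj))
      (fun j hj => h1 j (mem_insert_of_mem hj))
    have hP0 : 0 ≤ ∏ j ∈ s, (1 - a j) :=
      prod_nonneg fun j hj => sub_nonneg.2 (h1 j (mem_insert_of_mem hj))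
    have hS0 : 0 ≤ ∑ j ∈ s, a j := sum_nonneg fun j hj => h0 j (mem_insert_of_mem hj)
    nlinarith [h0 i (mem_insert_self i s), h1 i (mem_insert_self i s)]

theorem Real.multipliable_one_sub_of_summable {ι : Type*} {a : ι → ℝ} (ha : Summable a) :
    Multipliable fun i => 1 - a i := by
  simpa only [sub_eq_add_neg] using Real.multipliable_one_add_of_summable ha.neg

theorem Real.one_sub_tsum_le_tprod_one_sub {ι : Type*} {a : ι → ℝ} (h0 : ∀ i, 0 ≤ a i)
    (h1 : ∀ i, a i ≤ 1) (ha : Summable a) : 1 - ∑' i, a i ≤ ∏' i, (1 - a i) :=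
  ge_of_tendsto (Real.multipliable_one_sub_of_summable ha).hasProd <| Filter.Eventually.of_forall
    fun s => (sub_le_sub_left (ha.sum_le_tsum s fun i _ => h0 i) 1).trans
      (s.one_sub_sum_le_prod_one_sub (fun i _ => h0 i) fun i _ => h1 i)

section OrderedSemiring

variable {ι R : Type*} [CommSemiring R] [PartialOrder R] [IsOrderedRing R] [TopologicalSpace R]
  [OrderClosedTopology R] {f : ι → R}

theorem one_le_tprod_of_one_le (h : ∀ i, 1 ≤ f i) : 1 ≤ ∏' i, f i := by
  by_cases hf : Multipliable f
  · exact ge_of_tendsto hf.hasProd <| Filter.Eventually.of_forall fun s =>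
      Finset.one_le_prod fun i _ => h i
  · rw [tprod_eq_one_of_not_multipliable hf]

theorem tprod_le_one_of_nonneg_of_le_one (h0 : ∀ i, 0 ≤ f i) (h1 : ∀ i, f i ≤ 1) :
    ∏' i, f i ≤ 1 := by
  by_cases hf : Multipliable f
  · exact le_of_tendsto hf.hasProd <| Filter.Eventually.of_forall fun s =>
      Finset.prod_le_one (fun i _ => h0 i) fun i _ => h1 i
  · rw [tprod_eq_one_of_not_multipliable hf]

end OrderedSemiring

section

variable {q : ℝ}

theorem qPoch_pos (hq0 : 0 ≤ q) (hq1 : q < 1) (m : ℕ) : 0 < qPoch q m :=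
  prod_pos fun j _ => sub_pos.2 (pow_lt_one₀ hq0 hq1 j.succ_ne_zero)

theorem hasSum_pow_add_succ (hq0 : 0 ≤ q) (hq1 : q < 1) (m : ℕ) :
    HasSum (fun i : ℕ => q ^ (i + m + 1)) (q ^ (m + 1) / (1 - q)) := by
  have hterm : (fun i : ℕ => q ^ (i + m + 1)) = fun i => q ^ (m + 1) * q ^ i := by
    ext i
    ring
  rw [hterm, div_eq_mul_inv]
  exact (hasSum_geometric_of_lt_one hq0 hq1).mul_left _

theorem qPochInf_eq_qPoch_mul_tprod (hq0 : 0 ≤ q) (hq1 : q < 1) (m : ℕ) :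
    qPochInf q = qPoch q m * ∏' i : ℕ, (1 - q ^ (i + m + 1)) := by
  have h := Multipliable.prod_mul_tprod_nat_mul' (f := fun j : ℕ => 1 - q ^ (j + 1)) (k := m)
    (Real.multipliable_one_sub_of_summable (hasSum_pow_add_succ hq0 hq1 m).summable)
  simpa only [qPoch, qPochInf, add_right_comm _ m 1] using h.symm

theorem abs_qPochInf_div_qPoch_sub_one_le (hq0 : 0 ≤ q) (hq1 : q < 1) (m : ℕ) :
    |qPochInf q / qPoch q m - 1| ≤ q ^ (m + 1) / (1 - q) := by
  have hsum := hasSum_pow_add_succ hq0 hq1 m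
  have hpow_le_one (i : ℕ) : q ^ (i + m + 1) ≤ 1 := pow_le_one₀ hq0 hq1.le
  have hlower := Real.one_sub_tsum_le_tprod_one_sub (fun i => pow_nonneg hq0 (i + m + 1))
    hpow_le_one hsum.summable
  have hupper : ∏' i : ℕ, (1 - q ^ (i + m + 1)) ≤ 1 :=
    tprod_le_one_of_nonneg_of_le_one (fun i => sub_nonneg.2 (hpow_le_one i))
      fun i => sub_le_self 1 (pow_nonneg hq0 _)
  rw [qPochInf_eq_qPoch_mul_tprod hq0 hq1 m, mul_div_cancel_left₀ _ (qPoch_pos hq0 hq1 m).ne',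
    abs_sub_comm, abs_of_nonneg (sub_nonneg.2 hupper)]
  rw [hsum.tsum_eq] at hlower
  linarith

end

theorem stmt_8 (q : ℝ) (hq0 : 0 < q) (hq1 : q < 1) (n k : ℕ) (hk : k ≤ n / 2) :
    |qPochInf q / qPoch q (n - k) - 1| ≤
      (∏' j : ℕ, (1 + q ^ (j + 3))) * q ^ ((n : ℝ) / 2) / (1 - q) := by
  have hC : 1 ≤ ∏' j : ℕ, (1 + q ^ (j + 3)) :=
    one_le_tprod_of_one_le fun j => le_add_of_nonneg_right (pow_nonneg hq0.le _)
  have hexp : q ^ (n - k + 1) ≤ q ^ ((n : ℝ) / 2) := by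
    rw [← Real.rpow_natCast]
    refine Real.rpow_le_rpow_of_exponent_ge hq0 hq1.le ?_
    have h2k : ((2 * k : ℕ) : ℝ) ≤ n := by exact_mod_cast (by omega : 2 * k ≤ n)
    push_cast [Nat.cast_sub (by omega : k ≤ n)] at h2k ⊢
    linarith
  calc |qPochInf q / qPoch q (n - k) - 1| ≤ q ^ (n - k + 1) / (1 - q) :=
        abs_qPochInf_div_qPoch_sub_one_le hq0.le hq1 _
    _ ≤ q ^ ((n : ℝ) / 2) / (1 - q) := by gcongr
    _ ≤ (∏' j : ℕ, (1 + q ^ (j + 3))) * q ^ ((n : ℝ) / 2) / (1 - q) := by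
        gcongr
        exact le_mul_of_one_le_left (by positivity) hC
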